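/- arXiv:1310.8400 — 3 statements merged into one kernel-verified Lean document; each statement's English description precedes it below -/
import Mathlib

section
/- Let A be a weakly noetherian B₁-algebra. Then an ideal P of A is a minimal prime ideal of A (prime and minimal among all prime ideals) if and only if P is saturated, prime, and minimal with respect to inclusion among all saturated prime ideals of A. -/
/-!
Every prime `P` contains a saturated prime: by Zorn, take a saturated ideal `Q ≤ P` maximal among
saturated ideals contained in `P`. If `a, b ∉ Q` but `ab ∈ Q`, maximality puts elements `s, t ∉ P`
into the saturations of `Q + (a)` and `Q + (b)`, say `s + y = y` and `t + z = z`. Idempotence of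
addition then gives `st + yz = yz` with `yz ∈ (Q + (a))(Q + (b)) ⊆ Q`, so `st ∈ Q ⊆ P`,
contradicting primality of `P`. Since every prime thus contains a saturated prime, minimality
among primes and among saturated primes pick out the same ideals.
-/

/-- An ideal `I` of a `B₁`-algebra is *saturated* if `y ∈ I` and `x + y = y` imply `x ∈ I`. -/
def IsSaturated {A : Type*} [CommSemiring A] (I : Ideal A) : Prop :=
  ∀ x y : A, y ∈ I → x + y = y → x ∈ I

/-- `A` is *weakly noetherian* if every ascending chain of saturated ideals is eventually
stationary. -/
def WeaklyNoetherian (A : Type*) [CommSemiring A] : Prop :=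
  ∀ f : ℕ → Ideal A, (∀ n, IsSaturated (f n)) → (∀ n, f n ≤ f (n + 1)) →
    ∃ N, ∀ n, N ≤ n → f n = f N

section

variable {A : Type*} [CommSemiring A]

def saturation (I : Ideal A) : Ideal A where
  carrier := {x | ∃ y ∈ I, x + y = y}
  zero_mem' := ⟨0, I.zero_mem, add_zero 0⟩
  add_mem' := by
    rintro a b ⟨y, hy, hay⟩ ⟨z, hz, hbz⟩
    refine ⟨y + z, I.add_mem hy hz, ?_⟩
    rw [add_add_add_comm, hay, hbz]
  smul_mem' := by
    rintro r a ⟨y, hy, hay⟩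
    exact ⟨r * y, I.mul_mem_left r hy, by rw [smul_eq_mul, ← mul_add, hay]⟩

lemma add_self_of_one_add_one (hchar : (1 : A) + 1 = 1) (a : A) : a + a = a := by
  rw [← one_mul a, ← add_mul, hchar]

lemma mul_add_mul_eq_of_add_eq (hchar : (1 : A) + 1 = 1) {s t y z : A}
    (hs : s + y = y) (ht : t + z = z) : s * t + y * z = y * z := by
  have hyz : y * z = s * t + (s * z + y * t + y * z) :=
    calc y * z = (s + y) * (t + z) := by rw [hs, ht]
      _ = s * t + (s * z + y * t + y * z) := by ring
  conv_lhs => rw [hyz, ← add_assoc, add_self_of_one_add_one hchar]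
  exact hyz.symm

lemma isSaturated_bot : IsSaturated (⊥ : Ideal A) := by
  intro x y hy hxy
  rw [Ideal.mem_bot] at hy ⊢
  rwa [hy, add_zero] at hxy

lemma isSaturated_sSup_of_directedOn {c : Set (Ideal A)} (hc : ∀ I ∈ c, IsSaturated I)
    (hne : c.Nonempty) (hdir : DirectedOn (· ≤ ·) c) : IsSaturated (sSup c) := by
  intro x y hy hxy
  obtain ⟨I, hIc, hyI⟩ := (Submodule.mem_sSup_of_directed hne hdir).1 hy
  exact le_sSup hIc (hc I hIc x y hyI hxy)

lemma le_saturation (hchar : (1 : A) + 1 = 1) (I : Ideal A) : I ≤ saturation I :=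
  fun x hx => ⟨x, hx, add_self_of_one_add_one hchar x⟩

lemma isSaturated_saturation (I : Ideal A) : IsSaturated (saturation I) := by
  rintro x y ⟨z, hz, hyz⟩ hxy
  exact ⟨z, hz, by rw [← hyz, ← add_assoc, hxy]⟩

lemma sup_span_singleton_mul_sup_span_singleton_le (Q : Ideal A) (a b : A) :
    (Q ⊔ Ideal.span {a}) * (Q ⊔ Ideal.span {b}) ≤ Q ⊔ Ideal.span {a * b} := by
  rw [Ideal.sup_mul, Ideal.mul_sup, Ideal.mul_sup, Ideal.span_singleton_mul_span_singleton]
  exact sup_le (le_sup_of_le_left (sup_le Ideal.mul_le_right Ideal.mul_le_left))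
    (sup_le_sup_right Ideal.mul_le_right _)

lemma exists_notMem_add_eq_of_maximal (hchar : (1 : A) + 1 = 1) {P Q : Ideal A}
    (hQ : Maximal (fun I => IsSaturated I ∧ I ≤ P) Q) {x : A} (hx : x ∉ Q) :
    ∃ s ∉ P, ∃ y ∈ Q ⊔ Ideal.span {x}, s + y = y := by
  have hQle : Q ≤ saturation (Q ⊔ Ideal.span {x}) := le_sup_left.trans (le_saturation hchar _)
  have hnot : ¬ saturation (Q ⊔ Ideal.span {x}) ≤ P := fun hle =>
    hx <| hQ.eq_of_le ⟨isSaturated_saturation _, hle⟩ hQle ▸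
      le_saturation hchar _ (Ideal.mem_sup_right (Ideal.mem_span_singleton_self x))
  obtain ⟨s, ⟨y, hy, hsy⟩, hsP⟩ := Set.not_subset.1 hnot
  exact ⟨s, hsP, y, hy, hsy⟩

lemma isPrime_of_maximal_isSaturated_le (hchar : (1 : A) + 1 = 1) {P Q : Ideal A}
    (hP : P.IsPrime) (hQ : Maximal (fun I => IsSaturated I ∧ I ≤ P) Q) : Q.IsPrime := by
  obtain ⟨hQsat, hQP⟩ := hQ.prop
  refine ⟨fun htop => hP.ne_top (top_le_iff.1 (htop ▸ hQP)), fun {a b} hab => ?_⟩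
  by_contra! ⟨ha, hb⟩
  obtain ⟨s, hsP, y, hy, hsy⟩ := exists_notMem_add_eq_of_maximal hchar hQ ha
  obtain ⟨t, htP, z, hz, htz⟩ := exists_notMem_add_eq_of_maximal hchar hQ hb
  have hyz : y * z ∈ Q := by
    have := sup_span_singleton_mul_sup_span_singleton_le Q a b (Ideal.mul_mem_mul hy hz)
    rwa [sup_eq_left.2 ((Ideal.span_singleton_le_iff_mem Q).2 hab)] at this
  have hst : s * t ∈ Q := hQsat _ _ hyz (mul_add_mul_eq_of_add_eq hchar hsy htz)
  exact (hP.mem_or_mem (hQP hst)).elim hsP htP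

lemma exists_isSaturated_isPrime_le (hchar : (1 : A) + 1 = 1) {P : Ideal A} (hP : P.IsPrime) :
    ∃ Q : Ideal A, IsSaturated Q ∧ Q.IsPrime ∧ Q ≤ P := by
  obtain ⟨Q, -, hQ⟩ := zorn_le_nonempty₀ {I : Ideal A | IsSaturated I ∧ I ≤ P}
    (fun c hc hchain I hI => ⟨sSup c,
      ⟨isSaturated_sSup_of_directedOn (fun J hJ => (hc hJ).1) ⟨I, hI⟩ hchain.directedOn,
        sSup_le fun J hJ => (hc hJ).2⟩,
      fun _ hJ => le_sSup hJ⟩)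
    ⊥ ⟨isSaturated_bot, bot_le⟩
  exact ⟨Q, hQ.prop.1, isPrime_of_maximal_isSaturated_le hchar hP hQ, hQ.prop.2⟩

end

theorem minPrime_iff_minSaturatedPrime_general {A : Type*} [CommSemiring A]
    (hchar : (1 : A) + 1 = 1) (P : Ideal A) :
    (P.IsPrime ∧ ∀ Q : Ideal A, Q.IsPrime → Q ≤ P → Q = P) ↔
      (IsSaturated P ∧ P.IsPrime ∧
        ∀ Q : Ideal A, IsSaturated Q → Q.IsPrime → Q ≤ P → Q = P) := by
  constructor
  · rintro ⟨hP, hmin⟩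
    obtain ⟨Q, hQsat, hQprime, hQP⟩ := exists_isSaturated_isPrime_le hchar hP
    exact ⟨hmin Q hQprime hQP ▸ hQsat, hP, fun Q _ hQprime hQP => hmin Q hQprime hQP⟩
  · rintro ⟨-, hP, hmin⟩
    refine ⟨hP, fun Q hQ hQP => le_antisymm hQP ?_⟩
    obtain ⟨R, hRsat, hRprime, hRQ⟩ := exists_isSaturated_isPrime_le hchar hQ
    exact hmin R hRsat hRprime (hRQ.trans hQP) ▸ hRQ

/-- In a weakly noetherian `B₁`-algebra, an ideal is a minimal prime ideal if and only if it is
saturated, prime, and minimal among saturated prime ideals. -/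
theorem minPrime_iff_minSaturatedPrime {A : Type*} [CommSemiring A]
    (hchar : (1 : A) + 1 = 1) (hwn : WeaklyNoetherian A) (P : Ideal A) :
    (P.IsPrime ∧ ∀ Q : Ideal A, Q.IsPrime → Q ≤ P → Q = P) ↔
      (IsSaturated P ∧ P.IsPrime ∧
        ∀ Q : Ideal A, IsSaturated Q → Q.IsPrime → Q ≤ P → Q = P) :=
  minPrime_iff_minSaturatedPrime_general hchar P
end

section
/- Let A be a weakly noetherian B₁-algebra and let I be a saturated radical ideal of A (i.e., I is saturated and r(I) = I). Then I can be written as an intersection of finitely many saturated prime ideals of A. -/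
/-- The radical `r(S) = {x | xⁿ ∈ S for some n ≥ 1}` of a subset `S`. -/
def rad {A : Type*} [CommSemiring A] (S : Set A) : Set A :=
  {x | ∃ n : ℕ, 1 ≤ n ∧ x ^ n ∈ S}

section Aux

variable {A : Type*} [CommSemiring A]

/-- The saturation closure of an ideal. -/
def satCl (J : Ideal A) : Ideal A where
  carrier := {x | ∃ y ∈ J, x + y = y}
  zero_mem' := ⟨0, J.zero_mem, by simp⟩
  add_mem' := by
    rintro a b ⟨y, hy, hay⟩ ⟨z, hz, hbz⟩
    exact ⟨y + z, J.add_mem hy hz, by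
      calc a + b + (y + z) = (a + y) + (b + z) := by ring
        _ = y + z := by rw [hay, hbz]⟩
  smul_mem' := by
    rintro c a ⟨y, hy, hay⟩
    exact ⟨c * y, J.mul_mem_left c hy, by
      rw [smul_eq_mul, ← mul_add, hay]⟩

lemma mem_satCl {J : Ideal A} {x : A} : x ∈ satCl J ↔ ∃ y ∈ J, x + y = y := Iff.rfl

lemma satCl_isSaturated (J : Ideal A) : IsSaturated (satCl J) := by
  rintro x y ⟨z, hz, hyz⟩ hxy
  exact ⟨z, hz, by
    calc x + z = x + (y + z) := by rw [hyz]
      _ = (x + y) + z := by ring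
      _ = y + z := by rw [hxy]
      _ = z := hyz⟩

lemma le_satCl (hchar : (1 : A) + 1 = 1) (J : Ideal A) : J ≤ satCl J := by
  intro x hx
  refine ⟨x, hx, ?_⟩
  calc x + x = x * (1 + 1) := by ring
    _ = x := by rw [hchar, mul_one]

lemma pow_le {x y : A} (hchar : (1 : A) + 1 = 1) (h : x + y = y) (n : ℕ) :
    x ^ n + y ^ n = y ^ n := by
  induction n with
  | zero => simpa using hchar
  | succ k ih =>
    have h1 : x ^ (k + 1) + x * y ^ k = x * y ^ k := by
      calc x ^ (k + 1) + x * y ^ k = x * (x ^ k + y ^ k) := by ring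
        _ = x * y ^ k := by rw [ih]
    have h2 : x * y ^ k + y ^ (k + 1) = y ^ (k + 1) := by
      calc x * y ^ k + y ^ (k + 1) = (x + y) * y ^ k := by ring
        _ = y ^ (k + 1) := by rw [h]; ring
    calc x ^ (k + 1) + y ^ (k + 1) = x ^ (k + 1) + (x * y ^ k + y ^ (k + 1)) := by rw [h2]
      _ = (x ^ (k + 1) + x * y ^ k) + y ^ (k + 1) := by ring
      _ = x * y ^ k + y ^ (k + 1) := by rw [h1]
      _ = y ^ (k + 1) := h2

lemma radical_isSaturated (hchar : (1 : A) + 1 = 1) {J : Ideal A} (hJ : IsSaturated J) :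
    IsSaturated J.radical := by
  rintro x y ⟨n, hn⟩ hxy
  exact ⟨n, hJ _ _ hn (pow_le hchar hxy n)⟩

lemma rad_eq_radical (J : Ideal A) : rad (J : Set A) = (J.radical : Set A) := by
  ext x
  constructor
  · rintro ⟨n, _, hn⟩; exact ⟨n, hn⟩
  · rintro ⟨n, hn⟩
    rcases n with _ | m
    · refine ⟨1, le_refl 1, ?_⟩
      simp only [pow_zero] at hn
      simpa using J.mul_mem_left x hn
    · exact ⟨m + 1, by omega, hn⟩

/-- A decomposition predicate. -/
def Decomp (J : Ideal A) : Prop :=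
  ∃ (n : ℕ) (P : Fin n → Ideal A),
    (∀ i, IsSaturated (P i) ∧ (P i).IsPrime) ∧ J = ⨅ i, P i

lemma decomp_top : Decomp (⊤ : Ideal A) :=
  ⟨0, fun i => i.elim0, fun i => i.elim0, (iInf_of_empty _).symm⟩

lemma decomp_of_prime {J : Ideal A} (hs : IsSaturated J) (hp : J.IsPrime) : Decomp J :=
  ⟨1, fun _ => J, fun _ => ⟨hs, hp⟩, by simp⟩

lemma decomp_inf {J K : Ideal A} (hJ : Decomp J) (hK : Decomp K) : Decomp (J ⊓ K) := by
  obtain ⟨n, P, hP, rfl⟩ := hJ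
  obtain ⟨m, Q, hQ, rfl⟩ := hK
  refine ⟨n + m, Fin.addCases P Q, ?_, ?_⟩
  · intro i
    refine Fin.addCases (fun j => ?_) (fun j => ?_) i
    · simpa using hP j
    · simpa using hQ j
  · apply le_antisymm
    · refine le_iInf fun i => ?_
      refine Fin.addCases (fun j => ?_) (fun j => ?_) i
      · simpa using inf_le_left.trans (iInf_le P j)
      · simpa using inf_le_right.trans (iInf_le Q j)
    · refine le_inf (le_iInf fun j => ?_) (le_iInf fun j => ?_)
      · simpa using iInf_le (Fin.addCases P Q) (Fin.castAdd m j)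
      · simpa using iInf_le (Fin.addCases P Q) (Fin.natAdd n j)

lemma exists_maximal (hwn : WeaklyNoetherian A) (S : Set (Ideal A))
    (hsat : ∀ J ∈ S, IsSaturated J) (hne : S.Nonempty) :
    ∃ M ∈ S, ∀ J ∈ S, M ≤ J → J = M := by
  by_contra h
  push_neg at h
  -- h : ∀ M ∈ S, ∃ J ∈ S, M ≤ J ∧ J ≠ M
  choose g hg1 hg2 hg3 using h
  obtain ⟨I0, hI0⟩ := hne
  let f : ℕ → {J : Ideal A // J ∈ S} := fun n =>
    Nat.rec ⟨I0, hI0⟩ (fun _ p => ⟨g p.1 p.2, hg1 p.1 p.2⟩) n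
  obtain ⟨N, hN⟩ := hwn (fun n => (f n).1) (fun n => hsat _ (f n).2)
    (fun n => hg2 (f n).1 (f n).2)
  exact hg3 (f N).1 (f N).2 (hN (N + 1) (Nat.le_succ N))

end Aux

/-- In a weakly noetherian `B₁`-algebra, every saturated radical ideal is a finite intersection
of saturated prime ideals. -/
theorem saturated_radical_eq_inf_primes {A : Type*} [CommSemiring A]
    (hchar : (1 : A) + 1 = 1) (hwn : WeaklyNoetherian A) (I : Ideal A)
    (hIsat : IsSaturated I) (hIrad : rad (I : Set A) = (I : Set A)) :
    ∃ (n : ℕ) (P : Fin n → Ideal A),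
      (∀ i, IsSaturated (P i) ∧ (P i).IsPrime) ∧ I = ⨅ i, P i := by
  have hIrad' : I.radical = I := by
    apply SetLike.coe_injective
    rw [← rad_eq_radical]; exact hIrad
  by_contra hcon
  set T : Set (Ideal A) := {J | IsSaturated J ∧ J.radical = J ∧ ¬ Decomp J} with hT
  have hIT : I ∈ T := ⟨hIsat, hIrad', hcon⟩
  obtain ⟨M, ⟨hMsat, hMrad, hMnd⟩, hMmax⟩ :=
    exists_maximal hwn T (fun J hJ => hJ.1) ⟨I, hIT⟩
  -- M is not ⊤ and not prime
  have hMnetop : M ≠ ⊤ := fun h => hMnd (h ▸ decomp_top)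
  have hMnp : ¬ M.IsPrime := fun h => hMnd (decomp_of_prime hMsat h)
  rw [Ideal.isPrime_iff] at hMnp
  push_neg at hMnp
  obtain ⟨a, b, hab, ha, hb⟩ := hMnp hMnetop
  -- the two bigger saturated radical ideals
  set Ja : Ideal A := (satCl (M ⊔ Ideal.span {a})).radical with hJa
  set Jb : Ideal A := (satCl (M ⊔ Ideal.span {b})).radical with hJb
  have key : ∀ c : A, c ∉ M →
      IsSaturated ((satCl (M ⊔ Ideal.span {c})).radical) ∧
      ((satCl (M ⊔ Ideal.span {c})).radical).radical = (satCl (M ⊔ Ideal.span {c})).radical ∧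
      M ≤ (satCl (M ⊔ Ideal.span {c})).radical ∧
      (satCl (M ⊔ Ideal.span {c})).radical ≠ M := by
    intro c hc
    refine ⟨radical_isSaturated hchar (satCl_isSaturated _), Ideal.radical_idem _, ?_, ?_⟩
    · calc M ≤ M ⊔ Ideal.span {c} := le_sup_left
        _ ≤ satCl (M ⊔ Ideal.span {c}) := le_satCl hchar _
        _ ≤ _ := Ideal.le_radical
    · intro h
      apply hc
      rw [← h]
      exact Ideal.le_radical (le_satCl hchar _
        (Ideal.mem_sup_right (Ideal.subset_span (Set.mem_singleton c))))
  obtain ⟨haS, haR, haM, haNe⟩ := key a ha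
  obtain ⟨hbS, hbR, hbM, hbNe⟩ := key b hb
  -- Ja and Jb are decomposable (else they'd be in T, contradicting maximality)
  have hda : Decomp Ja := by
    by_contra h
    exact haNe (hMmax Ja ⟨haS, haR, h⟩ haM)
  have hdb : Decomp Jb := by
    by_contra h
    exact hbNe (hMmax Jb ⟨hbS, hbR, h⟩ hbM)
  -- M = Ja ⊓ Jb
  have hMeq : M = Ja ⊓ Jb := by
    apply le_antisymm
    · exact le_inf haM hbM
    · rintro x ⟨hxa, hxb⟩
      obtain ⟨n, y, hy, hny⟩ := hxa
      obtain ⟨m, z, hz, hmz⟩ := hxb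
      -- y ∈ M ⊔ span {a}, z ∈ M ⊔ span {b}
      rw [Submodule.mem_sup] at hy hz
      obtain ⟨u, hu, c, hc, rfl⟩ := hy
      obtain ⟨v, hv, d, hd, rfl⟩ := hz
      rw [Ideal.mem_span_singleton'] at hc hd
      obtain ⟨r, rfl⟩ := hc
      obtain ⟨s, rfl⟩ := hd
      -- the product (u + r*a)(v + s*b) ∈ M
      have hprod : (u + r * a) * (v + s * b) ∈ M := by
        have : (u + r * a) * (v + s * b)
            = u * (v + s * b) + (r * a) * v + (r * s) * (a * b) := by ring
        rw [this]
        exact M.add_mem (M.add_mem (M.mul_mem_right _ hu) (M.mul_mem_left _ hv))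
          (M.mul_mem_left _ hab)
      -- x^(n+m) + product = product
      have hle : x ^ (n + m) + (u + r * a) * (v + s * b) = (u + r * a) * (v + s * b) := by
        set y := u + r * a
        set z := v + s * b
        have hexp : x ^ (n + m) + (x ^ n * z + x ^ m * y) + y * z = y * z := by
          calc x ^ (n + m) + (x ^ n * z + x ^ m * y) + y * z
              = (x ^ n + y) * (x ^ m + z) := by ring
            _ = y * z := by rw [hny, hmz]
        have hidem : ∀ w : A, w + w = w := by
          intro w
          calc w + w = w * (1 + 1) := by ring
            _ = w := by rw [hchar, mul_one]
        calc x ^ (n + m) + y * z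
            = x ^ (n + m) + (x ^ (n + m) + (x ^ n * z + x ^ m * y) + y * z) := by rw [hexp]
          _ = (x ^ (n + m) + x ^ (n + m)) + (x ^ n * z + x ^ m * y) + y * z := by ring
          _ = x ^ (n + m) + (x ^ n * z + x ^ m * y) + y * z := by rw [hidem]
          _ = y * z := hexp
      have : x ^ (n + m) ∈ M := hMsat _ _ hprod hle
      have : x ∈ M.radical := ⟨n + m, this⟩
      rwa [hMrad] at this
  exact hMnd (hMeq ▸ decomp_inf hda hdb)
end

section
/- Let A be a weakly noetherian B₁-algebra and let I be a saturated ideal of A. Then the set of maximal I-conductors, i.e., the set of ideals of the form C_y(I) with y ∉ I that are maximal with respect to inclusion among all I-conductors, is finite, and each maximal I-conductor is a saturated prime ideal of A. -/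
/-- The conductor ideal `C_x(J) = {y | x * y ∈ J}`. -/
def conductorI {A : Type*} [CommSemiring A] (x : A) (J : Ideal A) : Ideal A where
  carrier := {y | x * y ∈ J}
  zero_mem' := by simp
  add_mem' := by
    intro a b ha hb
    simpa [mul_add] using J.add_mem ha hb
  smul_mem' := by
    intro c y hy
    simp only [smul_eq_mul, Set.mem_setOf_eq] at *
    rw [mul_left_comm]
    exact J.mul_mem_left c hy

/-- Auxiliary: the saturation of an ideal. -/
def saturIdeal {A : Type*} [CommSemiring A] (J : Ideal A) : Ideal A where
  carrier := {x | ∃ a ∈ J, x + a = a}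
  zero_mem' := ⟨0, J.zero_mem, by simp⟩
  add_mem' := by
    rintro x y ⟨a, ha, hxa⟩ ⟨b, hb, hyb⟩
    refine ⟨a + b, J.add_mem ha hb, ?_⟩
    calc x + y + (a + b) = (x + a) + (y + b) := by ring
    _ = a + b := by rw [hxa, hyb]
  smul_mem' := by
    rintro c x ⟨a, ha, hxa⟩
    exact ⟨c * a, J.mul_mem_left c ha, by rw [smul_eq_mul, ← mul_add, hxa]⟩

lemma mem_conductorI {A : Type*} [CommSemiring A] {x z : A} {J : Ideal A} :
    z ∈ conductorI x J ↔ x * z ∈ J := Iff.rfl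

lemma saturIdeal_saturated {A : Type*} [CommSemiring A] (J : Ideal A) :
    IsSaturated (saturIdeal J) := by
  rintro x y ⟨a, ha, hya⟩ hxy
  refine ⟨a, ha, ?_⟩
  calc x + a = x + (y + a) := by rw [hya]
  _ = y + a := by rw [← add_assoc, hxy]
  _ = a := hya

lemma saturIdeal_mono {A : Type*} [CommSemiring A] {J K : Ideal A} (h : J ≤ K) :
    saturIdeal J ≤ saturIdeal K := by
  rintro x ⟨a, ha, hxa⟩; exact ⟨a, h ha, hxa⟩

/-- In a weakly noetherian `B₁`-algebra, for a saturated ideal `I` the set of maximal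
`I`-conductors is finite, and each maximal `I`-conductor is a saturated prime ideal. -/
theorem maximal_conductors_finite_and_prime {A : Type*} [CommSemiring A]
    (hchar : (1 : A) + 1 = 1) (hwn : WeaklyNoetherian A) (I : Ideal A)
    (hIsat : IsSaturated I) :
    {P : Ideal A | (∃ y : A, y ∉ I ∧ P = conductorI y I) ∧
        ∀ x : A, x ∉ I → P ≤ conductorI x I → P = conductorI x I}.Finite ∧
      ∀ P : Ideal A,
        ((∃ y : A, y ∉ I ∧ P = conductorI y I) ∧
          ∀ x : A, x ∉ I → P ≤ conductorI x I → P = conductorI x I) →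
        IsSaturated P ∧ P.IsPrime := by
  have idem : ∀ a : A, a + a = a := fun a => by
    calc a + a = a * (1 + 1) := by ring
    _ = a := by rw [hchar, mul_one]
  -- Part 2: each maximal conductor is saturated and prime.
  have hmain : ∀ P : Ideal A,
      ((∃ y : A, y ∉ I ∧ P = conductorI y I) ∧
        ∀ x : A, x ∉ I → P ≤ conductorI x I → P = conductorI x I) →
      IsSaturated P ∧ P.IsPrime := by
    rintro P ⟨⟨y, hyI, rfl⟩, hmax⟩
    constructor
    · -- saturated
      intro x z hz hxz
      have : y * x + y * z = y * z := by rw [← mul_add, hxz]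
      exact hIsat (y * x) (y * z) hz this
    · constructor
      · -- ≠ ⊤
        intro htop
        have : (1 : A) ∈ conductorI y I := htop ▸ Submodule.mem_top
        rw [mem_conductorI, mul_one] at this
        exact hyI this
      · intro a b hab
        by_cases ha : a ∈ conductorI y I
        · exact Or.inl ha
        · right
          have hya : y * a ∉ I := ha
          have hle : conductorI y I ≤ conductorI (y * a) I := by
            intro z hz
            rw [mem_conductorI] at hz ⊢
            have h1 : y * a * z = a * (y * z) := by ring
            rw [h1]
            exact I.mul_mem_left a hz
          have heq := hmax (y * a) hya hle
          rw [heq, mem_conductorI]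
          have h1 : y * a * b = y * (a * b) := by ring
          rw [h1]
          exact hab
  refine ⟨?_, hmain⟩
  -- Part 1: finiteness.
  by_contra hfin
  have hinf : {P : Ideal A | (∃ y : A, y ∉ I ∧ P = conductorI y I) ∧
      ∀ x : A, x ∉ I → P ≤ conductorI x I → P = conductorI x I}.Infinite := hfin
  set S := {P : Ideal A | (∃ y : A, y ∉ I ∧ P = conductorI y I) ∧
      ∀ x : A, x ∉ I → P ≤ conductorI x I → P = conductorI x I} with hS
  obtain ⟨e⟩ : Nonempty (ℕ ↪ S) := ⟨hinf.natEmbedding⟩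
  have hmem : ∀ n, (e n : Ideal A) ∈ S := fun n => (e n).2
  choose y hyI hPy using fun n => (hmem n).1
  have hmaxP : ∀ n, ∀ x : A, x ∉ I → (e n : Ideal A) ≤ conductorI x I →
      (e n : Ideal A) = conductorI x I := fun n => (hmem n).2
  have hne : ∀ i j : ℕ, i ≠ j → (e i : Ideal A) ≠ (e j : Ideal A) := by
    intro i j hij h
    exact hij (e.injective (Subtype.ext h))
  -- the ascending chain
  set f : ℕ → Ideal A := fun n => saturIdeal (Ideal.span (y '' Set.Iic n)) with hf
  have hsat : ∀ n, IsSaturated (f n) := fun n => saturIdeal_saturated _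
  have hmono : ∀ n, f n ≤ f (n + 1) := fun n =>
    saturIdeal_mono (Ideal.span_mono (Set.image_mono fun i hi =>
      le_trans hi (Nat.le_succ n)))
  have hmemf : ∀ n, y n ∈ f n := fun n =>
    ⟨y n, Ideal.subset_span ⟨n, le_refl n, rfl⟩, idem _⟩
  -- strictness: y (n+1) ∉ f n
  have hstrict : ∀ n, y (n + 1) ∉ f n := by
    rintro n ⟨a, ha, hya⟩
    -- intersection of conductors ≤ P (n+1)
    have hint : ∀ z : A, (∀ i ≤ n, y i * z ∈ I) → y (n + 1) * z ∈ I := by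
      intro z hz
      have haz : a * z ∈ I := by
        have hle : Ideal.span (y '' Set.Iic n) ≤ conductorI z I := by
          rw [Ideal.span_le]
          rintro _ ⟨i, hi, rfl⟩
          rw [SetLike.mem_coe, mem_conductorI, mul_comm]
          exact hz i hi
        have := hle ha
        rw [mem_conductorI] at this
        rwa [mul_comm]
      have : y (n + 1) * z + a * z = a * z := by rw [← add_mul, hya]
      exact hIsat _ _ haz this
    -- choose b i ∈ P i \ P (n+1)
    have hb : ∀ i ≤ n, ∃ b : A, y i * b ∈ I ∧ y (n + 1) * b ∉ I := by
      intro i hi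
      by_contra hc
      push_neg at hc
      have hle : (e i : Ideal A) ≤ conductorI (y (n + 1)) I := by
        intro b hbP
        rw [hPy i, mem_conductorI] at hbP
        exact hc b hbP
      have := hmaxP i (y (n + 1)) (hyI (n + 1)) hle
      exact hne i (n + 1) (Nat.ne_of_lt (Nat.lt_succ_of_le hi))
        (this.trans (hPy (n + 1)).symm)
    choose! b hbmem hbnot using hb
    have hprime : (conductorI (y (n + 1)) I).IsPrime :=
      ((hmain _ ((hPy (n + 1)) ▸ hmem (n + 1))).2)
    set c : A := ∏ i ∈ Finset.range (n + 1), b i with hc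
    have hcmem : ∀ i ≤ n, y i * c ∈ I := by
      intro i hi
      have hdvd : b i ∣ c := Finset.dvd_prod_of_mem b (Finset.mem_range.mpr
        (Nat.lt_succ_of_le hi))
      obtain ⟨d, hd⟩ := hdvd
      rw [hd, ← mul_assoc]
      exact I.mul_mem_right d (hbmem i hi)
    have hcP : y (n + 1) * c ∈ I := hint c hcmem
    have : c ∈ conductorI (y (n + 1)) I := hcP
    rw [hc, Ideal.IsPrime.prod_mem_iff] at this
    obtain ⟨i, hi, hbi⟩ := this
    exact hbnot i (Nat.le_of_lt_succ (Finset.mem_range.mp hi)) hbi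
  obtain ⟨N, hN⟩ := hwn f hsat hmono
  have h1 : y (N + 1) ∈ f N := by
    rw [← hN (N + 1) (Nat.le_succ N)]
    exact hmemf (N + 1)
  exact hstrict N h1
end
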